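/- Let π denote the real number pi and let ζ₃ := Σ_{n=1}^{∞} 1/n³. Set m* := −2/5, λ* := (8/3) π² (3/5)^{3/2}, and U* := ζ₃/(2π²). Then 1 + m* = 3/5 > 0, λ* > 0, and the high-temperature beta-function system vanishes at (U*, m*, λ*): (i) −U* + ζ₃/(2π²) = 0; (ii) −2 m* − (1/(2π²)) · λ*/√(1 + m*) = 0; (iii) −λ* + (3/(8π²)) · λ*²/(1 + m*)^{3/2} = 0. In particular the system admits a non-trivial (λ* ≠ 0) fixed point with m* < 0, indicating spontaneous breaking of the symmetry χ → −χ. -/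
import Mathlib


/-- The high-temperature fixed point of the thermal `λφ⁴`
flow in `d = 4`: with `ζ₃ = Σ_{n≥1} 1/n³`, `m* = −2/5`,
`λ* = (8/3) π² (3/5)^{3/2}`, `U* = ζ₃/(2π²)`, one has `1 + m* = 3/5 > 0`,
`λ* > 0`, and the three beta functions vanish at `(U*, m*, λ*)`; in particular
the system admits a non-trivial (`λ* ≠ 0`) fixed point with `m* < 0`. -/
theorem high_temperature_fixed_point :
    let π : ℝ := Real.pi
    let ζ₃ : ℝ := ∑' n : ℕ, 1 / ((n : ℝ) + 1) ^ 3
    let mstar : ℝ := -2 / 5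
    let lstar : ℝ := (8 / 3) * π ^ 2 * ((3 / 5 : ℝ) ^ ((3 : ℝ) / 2))
    let Ustar : ℝ := ζ₃ / (2 * π ^ 2)
    (1 + mstar = 3 / 5) ∧ (0 < 1 + mstar) ∧ (0 < lstar) ∧
    (-Ustar + ζ₃ / (2 * π ^ 2) = 0) ∧
    (-2 * mstar - (1 / (2 * π ^ 2)) * lstar / Real.sqrt (1 + mstar) = 0) ∧
    (-lstar + (3 / (8 * π ^ 2)) * lstar ^ 2 / ((1 + mstar) ^ ((3 : ℝ) / 2)) = 0) ∧
    (lstar ≠ 0) ∧ (mstar < 0) := by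
  intro π ζ₃ mstar lstar Ustar
  have h35 : (0:ℝ) < 3 / 5 := by norm_num
  have hpi : (0:ℝ) < π := Real.pi_pos
  have hpi2 : (0:ℝ) < π ^ 2 := by positivity
  have ha : (0:ℝ) < (3 / 5 : ℝ) ^ ((3 : ℝ) / 2) := Real.rpow_pos_of_pos h35 _
  have hm : (1:ℝ) + mstar = 3 / 5 := by norm_num [mstar]
  have hl : (0:ℝ) < lstar := by unfold lstar; positivity
  have hs : Real.sqrt (3/5) ^ 2 = 3/5 := Real.sq_sqrt h35.le
  have hs0 : (0:ℝ) < Real.sqrt (3/5) := Real.sqrt_pos.mpr h35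
  have ha3 : ((3:ℝ)/5) ^ ((3 : ℝ)/2) = Real.sqrt (3/5) ^ 3 := by
    rw [show Real.sqrt (3/5) ^ 3 = Real.sqrt (3/5) ^ (3:ℕ) from rfl,
      Real.sqrt_eq_rpow, ← Real.rpow_natCast ((3/5:ℝ) ^ ((1:ℝ)/2)) 3,
      ← Real.rpow_mul h35.le]
    norm_num
  refine ⟨hm, by norm_num [mstar], hl, by ring, ?_, ?_, ne_of_gt hl, by norm_num [mstar]⟩
  · show -2 * mstar - (1 / (2 * π ^ 2)) * lstar / Real.sqrt (1 + mstar) = 0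
    rw [hm]
    unfold lstar mstar
    rw [ha3, show Real.sqrt (3/5) ^ 3 = (3/5) * Real.sqrt (3/5) by rw [pow_succ, hs]]
    set s := Real.sqrt (3/5) with hsdef
    field_simp
    ring
  · show -lstar + (3 / (8 * π ^ 2)) * lstar ^ 2 / ((1 + mstar) ^ ((3 : ℝ) / 2)) = 0
    rw [hm]
    unfold lstar
    field_simp
    ring
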